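/- Let n ≥ 1 and G ∈ 𝒢_n. Every cycle of G contains at least one vertex of column C(n) and at least one vertex of column C(n+1). -/

import Mathlib

open Finset

noncomputable section

/-- Vertices of a complete binary tree of height `n`: a level `k ≤ n` and an index below `2^k`. -/
abbrev TV (n : ℕ) : Type := Σ k : Fin (n+1), Fin (2^(k : ℕ))

/-- Adjacency in a complete binary tree: one vertex is the parent of the other. -/
def treeAdj (n : ℕ) (a b : TV n) : Prop :=
  ((a.1 : ℕ) + 1 = (b.1 : ℕ) ∧ (b.2 : ℕ) / 2 = (a.2 : ℕ)) ∨
  ((b.1 : ℕ) + 1 = (a.1 : ℕ) ∧ (a.2 : ℕ) / 2 = (b.2 : ℕ))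

instance (n : ℕ) (a b : TV n) : Decidable (treeAdj n a b) := by
  unfold treeAdj; infer_instance

lemma treeAdj_symm (n : ℕ) : Symmetric (treeAdj n) := by
  intro a b h; unfold treeAdj at *; tauto

lemma treeAdj_irrefl (n : ℕ) (a : TV n) : ¬ treeAdj n a a := by
  unfold treeAdj; omega

/-- Vertices of a welded-trees graph: disjoint union of the two trees. -/
abbrev WTV (n : ℕ) : Type := TV n ⊕ TV n

def wtRoot (n : ℕ) : TV n := ⟨⟨0, Nat.succ_pos n⟩, ⟨0, by norm_num⟩⟩

/-- The root of the left tree. -/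
def wtSource (n : ℕ) : WTV n := Sum.inl (wtRoot n)

/-- The root of the right tree. -/
def wtTarget (n : ℕ) : WTV n := Sum.inr (wtRoot n)

instance (n : ℕ) : Inhabited (WTV n) := ⟨wtSource n⟩

/-- The index (among the `2^n` leaves of its tree) of a leaf. -/
def leafIdx {n : ℕ} (a : TV n) : Fin (2^n) := ⟨(a.2 : ℕ) % 2^n, Nat.mod_lt _ (by positivity)⟩

/-- Adjacency in the welded trees graph determined by the welding data `W`
(`W i j = true` iff the `i`-th left leaf is welded to the `j`-th right leaf). -/
def weldedAdj (n : ℕ) (W : Fin (2^n) → Fin (2^n) → Bool) : WTV n → WTV n → Prop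
  | Sum.inl a, Sum.inl b => treeAdj n a b
  | Sum.inr a, Sum.inr b => treeAdj n a b
  | Sum.inl a, Sum.inr b => (a.1 : ℕ) = n ∧ (b.1 : ℕ) = n ∧ W (leafIdx a) (leafIdx b) = true
  | Sum.inr b, Sum.inl a => (a.1 : ℕ) = n ∧ (b.1 : ℕ) = n ∧ W (leafIdx a) (leafIdx b) = true

/-- The welded trees graph determined by the welding data `W`. -/
def weldedGraph (n : ℕ) (W : Fin (2^n) → Fin (2^n) → Bool) : SimpleGraph (WTV n) where
  Adj := weldedAdj n W
  symm := by
    constructor; rintro (a|a) (b|b) h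
    · exact treeAdj_symm n h
    · exact h
    · exact h
    · exact treeAdj_symm n h
  loopless := by
    constructor; rintro (a|a) h
    · exact treeAdj_irrefl n a h
    · exact treeAdj_irrefl n a h

instance (n : ℕ) (W : Fin (2^n) → Fin (2^n) → Bool) : DecidableRel (weldedGraph n W).Adj := by
  rintro (a|a) (b|b)
  · exact inferInstanceAs (Decidable (treeAdj n a b))
  · exact inferInstanceAs (Decidable ((a.1 : ℕ) = n ∧ (b.1 : ℕ) = n ∧ W (leafIdx a) (leafIdx b) = true))
  · exact inferInstanceAs (Decidable ((b.1 : ℕ) = n ∧ (a.1 : ℕ) = n ∧ W (leafIdx b) (leafIdx a) = true))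
  · exact inferInstanceAs (Decidable (treeAdj n a b))

/-- The index of the column of a vertex: its distance to `source`. -/
def colIdx (n : ℕ) (W : Fin (2^n) → Fin (2^n) → Bool) (v : WTV n) : ℕ :=
  (weldedGraph n W).dist (wtSource n) v

/-- The `k`-th column: vertices at distance `k` from `source`. -/
def column (n : ℕ) (W : Fin (2^n) → Fin (2^n) → Bool) (k : ℕ) : Set (WTV n) :=
  {v | colIdx n W v = k}

/-- The bipartite graph on the leaves of the two trees given by the welding edges. -/
def weldGraphLeaves (n : ℕ) (W : Fin (2^n) → Fin (2^n) → Bool) :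
    SimpleGraph (Fin (2^n) ⊕ Fin (2^n)) where
  Adj x y := (∃ i j, x = Sum.inl i ∧ y = Sum.inr j ∧ W i j = true) ∨
             (∃ i j, x = Sum.inr j ∧ y = Sum.inl i ∧ W i j = true)
  symm := by
    constructor; rintro x y (⟨i, j, hx, hy, h⟩ | ⟨i, j, hx, hy, h⟩)
    · exact Or.inr ⟨i, j, hy, hx, h⟩
    · exact Or.inl ⟨i, j, hy, hx, h⟩
  loopless := by
    constructor; rintro x (⟨i, j, hx, hy, h⟩ | ⟨i, j, hx, hy, h⟩) <;> subst hx <;> simp_all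

/-- `W` is a valid welding datum: every leaf is welded to exactly two leaves of the other
tree, and the welding edges form a single cycle (equivalently, the 2-regular bipartite
welding graph on the `2^{n+1}` leaves is connected). -/
def IsWeldedData (n : ℕ) (W : Fin (2^n) → Fin (2^n) → Bool) : Prop :=
  (∀ i : Fin (2^n), (univ.filter (fun j => W i j = true)).card = 2) ∧
  (∀ j : Fin (2^n), (univ.filter (fun i => W i j = true)).card = 2) ∧
  (weldGraphLeaves n W).Connected

end

/-!
A cycle cannot stay inside one of the two binary trees: at a vertex of maximal level on the
cycle, both cycle-neighbours would have to be its parent. Hence every cycle uses a welding edge,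
whose endpoints are a left leaf, at distance `n` from `source`, and a right leaf, at distance
`n + 1`. The lower bounds on these distances come from the potential that increases by at most
one along each edge: the level in the left tree, and `2n + 1` minus the level in the right tree.
-/

namespace SimpleGraph

variable {V : Type*} {G : SimpleGraph V}

lemma Walk.IsCycle.exists_adj_ne {u v : V} {c : G.Walk u u} (hc : c.IsCycle)
    (hv : v ∈ c.support) :
    ∃ x ∈ c.support, ∃ y ∈ c.support, x ≠ y ∧ G.Adj v x ∧ G.Adj v y := by
  obtain ⟨x, y, hxy, hxy_eq⟩ := Set.ncard_eq_two.mp (hc.ncard_neighborSet_toSubgraph_eq_two hv)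
  have hx : c.toSubgraph.Adj v x := by simp [← Subgraph.mem_neighborSet, hxy_eq]
  have hy : c.toSubgraph.Adj v y := by simp [← Subgraph.mem_neighborSet, hxy_eq]
  exact ⟨x, c.mem_verts_toSubgraph.mp (c.toSubgraph.edge_vert hx.symm),
    y, c.mem_verts_toSubgraph.mp (c.toSubgraph.edge_vert hy.symm), hxy, hx.adj_sub, hy.adj_sub⟩

lemma Walk.le_add_length_of_adj_le_succ {f : V → ℕ} (hf : ∀ ⦃u v⦄, G.Adj u v → f v ≤ f u + 1)
    {u v : V} (p : G.Walk u v) : f v ≤ f u + p.length := by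
  induction p with
  | nil => simp
  | cons h _ ih => have := hf h; rw [Walk.length_cons]; omega

lemma Reachable.le_add_dist_of_adj_le_succ {f : V → ℕ}
    (hf : ∀ ⦃u v⦄, G.Adj u v → f v ≤ f u + 1) {u v : V} (h : G.Reachable u v) :
    f v ≤ f u + G.dist u v := by
  obtain ⟨p, hp⟩ := h.exists_walk_length_eq_dist
  exact hp ▸ p.le_add_length_of_adj_le_succ hf

end SimpleGraph

open SimpleGraph

variable {n : ℕ}

lemma TV.ext_val {a b : TV n} (h₁ : (a.1 : ℕ) = b.1) (h₂ : (a.2 : ℕ) = b.2) : a = b := by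
  obtain ⟨⟨k, hk⟩, ⟨i, hi⟩⟩ := a
  obtain ⟨⟨k', hk'⟩, ⟨i', hi'⟩⟩ := b
  simp only at h₁ h₂
  subst h₁ h₂
  rfl

lemma treeAdj_eq_of_level_le {a b b' : TV n} (hb : treeAdj n a b) (hb' : treeAdj n a b')
    (hb_le : (b.1 : ℕ) ≤ a.1) (hb'_le : (b'.1 : ℕ) ≤ a.1) : b = b' := by
  unfold treeAdj at hb hb'
  exact TV.ext_val (by omega) (by omega)

lemma exists_walk_source_inl (W : Fin (2^n) → Fin (2^n) → Bool) :
    ∀ (k : ℕ) (a : TV n), (a.1 : ℕ) = k →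
      ∃ p : (weldedGraph n W).Walk (wtSource n) (Sum.inl a), p.length = k
  | 0, a, ha => by
    have ha2 : (a.2 : ℕ) = 0 := by have := a.2.isLt; simp only [ha, pow_zero] at this; omega
    have : a = wtRoot n := TV.ext_val ha ha2
    subst this
    exact ⟨.nil, rfl⟩
  | k + 1, a, ha => by
    have hlt : (a.2 : ℕ) / 2 < 2 ^ k := by
      have : (a.2 : ℕ) < 2 ^ (k + 1) := ha ▸ a.2.isLt
      rw [pow_succ] at this; omega
    let parent : TV n := ⟨⟨k, by omega⟩, ⟨(a.2 : ℕ) / 2, hlt⟩⟩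
    have hadj : (weldedGraph n W).Adj (Sum.inl parent) (Sum.inl a) :=
      show treeAdj n parent a from Or.inl ⟨ha.symm, rfl⟩
    obtain ⟨p, hp⟩ := exists_walk_source_inl W k parent rfl
    exact ⟨p.concat hadj, by rw [Walk.length_concat, hp]⟩

/-- The column of each vertex when the welding is connected; in general a lower bound for it. -/
def treeCol (n : ℕ) : WTV n → ℕ
  | Sum.inl a => a.1
  | Sum.inr b => 2 * n + 1 - b.1

def treeLevel : WTV n → ℕ := Sum.elim (fun a => a.1) (fun b => b.1)

variable {W : Fin (2^n) → Fin (2^n) → Bool}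

lemma treeCol_le_succ_of_adj {u v : WTV n} (h : (weldedGraph n W).Adj u v) :
    treeCol n v ≤ treeCol n u + 1 := by
  rcases u with a | a <;> rcases v with b | b <;>
    simp only [weldedGraph, weldedAdj, treeAdj, treeCol] at h ⊢ <;>
    have := a.1.isLt <;> have := b.1.isLt <;> omega

lemma treeCol_le_colIdx {v : WTV n} (h : (weldedGraph n W).Reachable (wtSource n) v) :
    treeCol n v ≤ colIdx n W v := by
  have h_source : treeCol n (wtSource n) = 0 := rfl
  simpa [colIdx, h_source] using h.le_add_dist_of_adj_le_succ fun _ _ ↦ treeCol_le_succ_of_adj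

lemma colIdx_inl (a : TV n) : colIdx n W (Sum.inl a) = a.1 := by
  obtain ⟨p, hp⟩ := exists_walk_source_inl W a.1 a rfl
  exact le_antisymm (hp ▸ dist_le p) (treeCol_le_colIdx ⟨p⟩)

lemma colIdx_inr_of_adj {a b : TV n} (h : (weldedGraph n W).Adj (Sum.inl a) (Sum.inr b)) :
    colIdx n W (Sum.inr b) = n + 1 := by
  obtain ⟨ha, hb, -⟩ : (a.1 : ℕ) = n ∧ (b.1 : ℕ) = n ∧ _ := id h
  obtain ⟨p, hp⟩ := exists_walk_source_inl W n a ha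
  have hle : colIdx n W (Sum.inr b) ≤ n + 1 := by
    simpa [colIdx, Walk.length_concat, hp] using dist_le (p.concat h)
  have hge := treeCol_le_colIdx (W := W) ⟨p.concat h⟩
  simp only [treeCol, hb] at hge
  omega

lemma weldedGraph_eq_of_adj_of_isLeft_eq {v x y : WTV n} (hx : (weldedGraph n W).Adj v x)
    (hy : (weldedGraph n W).Adj v y) (hx_side : x.isLeft = v.isLeft)
    (hy_side : y.isLeft = v.isLeft) (hx_le : treeLevel x ≤ treeLevel v)
    (hy_le : treeLevel y ≤ treeLevel v) : x = y := by
  rcases v with a | a <;> rcases x with b | b <;> rcases y with b' | b' <;>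
    simp only [Sum.isLeft_inl, Sum.isLeft_inr, reduceCtorEq] at hx_side hy_side <;>
    exact congrArg _ (treeAdj_eq_of_level_le hx hy hx_le hy_le)

lemma SimpleGraph.Walk.IsCycle.exists_weld_adj {u : WTV n} {c : (weldedGraph n W).Walk u u}
    (hc : c.IsCycle) : ∃ a b : TV n, Sum.inl a ∈ c.support ∧ Sum.inr b ∈ c.support ∧
      (weldedGraph n W).Adj (Sum.inl a) (Sum.inr b) := by
  by_contra! hno_weld
  have same_side : ∀ v ∈ c.support, ∀ x ∈ c.support, (weldedGraph n W).Adj v x →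
      x.isLeft = v.isLeft := by
    rintro (a | a) ha (b | b) hb h
    · rfl
    · exact absurd h (hno_weld a b ha hb)
    · exact absurd h.symm (hno_weld b a hb ha)
    · rfl
  obtain ⟨v, hv, hv_max⟩ := c.support.toFinset.exists_max_image treeLevel
    ⟨u, List.mem_toFinset.mpr c.start_mem_support⟩
  rw [List.mem_toFinset] at hv
  obtain ⟨x, hx, y, hy, hxy, hvx, hvy⟩ := hc.exists_adj_ne hv
  exact hxy (weldedGraph_eq_of_adj_of_isLeft_eq hvx hvy (same_side v hv x hx hvx)
    (same_side v hv y hy hvy) (hv_max x (List.mem_toFinset.mpr hx))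
    (hv_max y (List.mem_toFinset.mpr hy)))

theorem welded_trees_cycle_meets_middle_general (n : ℕ)
    (W : Fin (2^n) → Fin (2^n) → Bool) :
    ∀ (u : WTV n) (c : (weldedGraph n W).Walk u u), c.IsCycle →
      (∃ v ∈ c.support, v ∈ column n W n) ∧ (∃ v ∈ c.support, v ∈ column n W (n+1)) := by
  intro u c hc
  obtain ⟨a, b, ha, hb, hab⟩ := hc.exists_weld_adj
  obtain ⟨ha_leaf, -⟩ : (a.1 : ℕ) = n ∧ _ := id hab
  exact ⟨⟨Sum.inl a, ha, (colIdx_inl a).trans ha_leaf⟩, ⟨Sum.inr b, hb, colIdx_inr_of_adj hab⟩⟩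

/-- Every cycle of a welded-trees graph contains at least one vertex of
column `C(n)` and at least one vertex of column `C(n+1)`. -/
theorem welded_trees_cycle_meets_middle (n : ℕ) (hn : 1 ≤ n)
    (W : Fin (2^n) → Fin (2^n) → Bool) (hW : IsWeldedData n W) :
    ∀ (u : WTV n) (c : (weldedGraph n W).Walk u u), c.IsCycle →
      (∃ v ∈ c.support, v ∈ column n W n) ∧ (∃ v ∈ c.support, v ∈ column n W (n+1)) :=
  welded_trees_cycle_meets_middle_general n W
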